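/- arXiv:1512.08032 — 7 statements merged into one kernel-verified Lean document; each statement's English description precedes it below -/
import Mathlib

section
/- For all integers n ≥ 0 and k ≥ 1 the inequality (α_n / α_k) · e^{τ_k (μ_n − μ_k)} ≤ e^{−δ |n−k|} holds. -/
open Filter

/-- `Del δ μ n` is `Δ_n := δ ∑_{j=0}^{n-1} (μ_{j+1} - μ_j)
    ∑_{m=j+1}^∞ ( 1/(μ_m − μ_{m−1}) + 1/(μ_{m+1} − μ_m) )`; in particular `Δ_0 = 0`. -/
noncomputable def Del (δ : ℝ) (μ : ℕ → ℝ) (n : ℕ) : ℝ :=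
  δ * ∑ j ∈ Finset.range n, (μ (j + 1) - μ j) *
    ∑' i : ℕ, (1 / (μ (j + 1 + i) - μ (j + i)) + 1 / (μ (j + 2 + i) - μ (j + 1 + i)))

/-- `tk δ μ k` is `t_k := (Δ_{k−1} − Δ_k)/(μ_k − μ_{k−1})` (for `k ≥ 1`). -/
noncomputable def tk (δ : ℝ) (μ : ℕ → ℝ) (k : ℕ) : ℝ :=
  (Del δ μ (k - 1) - Del δ μ k) / (μ k - μ (k - 1))

/-- `tauk δ μ k` is `τ_k := t_k + δ/(μ_k − μ_{k−1})` (for `k ≥ 1`). -/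
noncomputable def tauk (δ : ℝ) (μ : ℕ → ℝ) (k : ℕ) : ℝ :=
  tk δ μ k + δ / (μ k - μ (k - 1))

/-- auxiliary: `hh μ i = 1/(μ (i+1) - μ i)`. -/
noncomputable def hh (μ : ℕ → ℝ) (i : ℕ) : ℝ := 1 / (μ (i + 1) - μ i)

/-- auxiliary: partial sums of `hh`. -/
noncomputable def PP (μ : ℕ → ℝ) (j : ℕ) : ℝ := ∑ i ∈ Finset.range j, hh μ i

/-- auxiliary: total sum of `hh`. -/
noncomputable def HH (μ : ℕ → ℝ) : ℝ := ∑' i, hh μ i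

lemma hh_pos {μ : ℕ → ℝ} (hmono : StrictMono μ) (i : ℕ) : 0 < hh μ i := by
  have := hmono (Nat.lt_succ_self i)
  unfold hh
  have : 0 < μ (i + 1) - μ i := by linarith
  positivity

lemma PP_mono {μ : ℕ → ℝ} (hmono : StrictMono μ) {a b : ℕ} (hab : a ≤ b) :
    PP μ a ≤ PP μ b := by
  unfold PP
  exact Finset.sum_le_sum_of_subset_of_nonneg (Finset.range_subset_range.2 hab)
    (fun i _ _ => (hh_pos hmono i).le)

lemma PP_succ (μ : ℕ → ℝ) (j : ℕ) : PP μ (j + 1) = PP μ j + hh μ j := by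
  unfold PP; rw [Finset.sum_range_succ]

lemma tail_eq {μ : ℕ → ℝ} (hsum : Summable (hh μ)) (j : ℕ) :
    ∑' i, hh μ (i + j) = HH μ - PP μ j := by
  have := Summable.sum_add_tsum_nat_add (f := hh μ) j hsum
  unfold HH PP
  linarith

lemma summable_tail {μ : ℕ → ℝ} (hsum : Summable (hh μ)) (j : ℕ) :
    Summable (fun i => hh μ (i + j)) := (summable_nat_add_iff j).2 hsum

lemma Del_eq {μ : ℕ → ℝ} (hsum : Summable (hh μ)) (δ : ℝ) (n : ℕ) :
    Del δ μ n = δ * ∑ j ∈ Finset.range n, (μ (j + 1) - μ j) *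
      ((HH μ - PP μ j) + (HH μ - PP μ (j + 1))) := by
  unfold Del
  congr 1
  apply Finset.sum_congr rfl
  intro j _
  congr 1
  have e : (fun i : ℕ => 1 / (μ (j + 1 + i) - μ (j + i)) + 1 / (μ (j + 2 + i) - μ (j + 1 + i)))
      = fun i => hh μ (i + j) + hh μ (i + (j + 1)) := by
    funext i
    have e1 : j + 1 + i = i + j + 1 := by omega
    have e2 : j + 2 + i = i + (j + 1) + 1 := by omega
    have e3 : j + i = i + j := by omega
    simp only [hh, e1, e2, e3]
    rfl
  rw [e, Summable.tsum_add (summable_tail hsum j) (summable_tail hsum (j + 1)),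
    tail_eq hsum j, tail_eq hsum (j + 1)]

lemma tauk_eq {μ : ℕ → ℝ} (hmono : StrictMono μ) (hsum : Summable (hh μ)) (δ : ℝ)
    {k : ℕ} (hk : 1 ≤ k) : tauk δ μ k = 2 * δ * (PP μ k - HH μ) := by
  obtain ⟨k', rfl⟩ := Nat.exists_eq_add_of_le hk
  have hd : μ (k' + 1) - μ k' ≠ 0 := by
    have := hmono (Nat.lt_succ_self k')
    intro h; linarith
  have hsub : 1 + k' - 1 = k' := by omega
  have h1k : 1 + k' = k' + 1 := by omega
  unfold tauk tk
  rw [hsub, h1k, Del_eq hsum, Del_eq hsum, Finset.sum_range_succ, PP_succ]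
  unfold hh
  field_simp
  ring

lemma g_step {μ : ℕ → ℝ} (hmono : StrictMono μ) (hsum : Summable (hh μ)) (δ : ℝ)
    {k : ℕ} (hk : 1 ≤ k) (j : ℕ) :
    (Del δ μ (j + 1) + tauk δ μ k * μ (j + 1)) - (Del δ μ j + tauk δ μ k * μ j)
      = δ * ((μ (j + 1) - μ j) * (2 * PP μ k - PP μ j - PP μ (j + 1))) := by
  rw [Del_eq hsum δ (j + 1), Del_eq hsum δ j, tauk_eq hmono hsum δ hk,
    Finset.sum_range_succ]
  ring

/-- For all `n ≥ 0` and `k ≥ 1`: `(α_n/α_k) e^{τ_k (μ_n − μ_k)} ≤ e^{−δ|n−k|}`,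
where `α_n = e^{Δ_n}`. -/
theorem stmt_2 (μ : ℕ → ℝ) (hmono : StrictMono μ)
    (hsum : Summable fun n => 1 / (μ (n + 1) - μ n))
    (δ : ℝ) (hδ : 0 < δ) (n k : ℕ) (hk : 1 ≤ k) :
    Real.exp (Del δ μ n) / Real.exp (Del δ μ k) *
      Real.exp (tauk δ μ k * (μ n - μ k)) ≤
      Real.exp (-δ * |(n : ℝ) - (k : ℝ)|) := by
  have hsum' : Summable (hh μ) := hsum
  set g : ℕ → ℝ := fun j => Del δ μ j + tauk δ μ k * μ j with hg
  have dpos : ∀ j : ℕ, 0 < μ (j + 1) - μ j := fun j => by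
    have := hmono (Nat.lt_succ_self j); linarith
  have step_up : ∀ j, k ≤ j → g (j + 1) ≤ g j - δ := by
    intro j hj
    have hstep := g_step hmono hsum' δ hk j
    have h1 : PP μ k ≤ PP μ j := PP_mono hmono hj
    have h2 : PP μ k + hh μ j ≤ PP μ (j + 1) := by
      rw [PP_succ]; linarith
    have hb : 2 * PP μ k - PP μ j - PP μ (j + 1) ≤ -hh μ j := by linarith
    have hd := dpos j
    have : δ * ((μ (j + 1) - μ j) * (2 * PP μ k - PP μ j - PP μ (j + 1)))
        ≤ δ * ((μ (j + 1) - μ j) * (-hh μ j)) := by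
      apply mul_le_mul_of_nonneg_left _ hδ.le
      exact mul_le_mul_of_nonneg_left hb hd.le
    have hdh : (μ (j + 1) - μ j) * hh μ j = 1 := by
      unfold hh; field_simp
    have h4 : (μ (j + 1) - μ j) * (-hh μ j) = -1 := by linear_combination -hdh
    simp only [hg] at hstep ⊢
    nlinarith [hdh]
  have step_down : ∀ j, j + 1 ≤ k → g j + δ ≤ g (j + 1) := by
    intro j hj
    have hstep := g_step hmono hsum' δ hk j
    have h1 : PP μ (j + 1) ≤ PP μ k := PP_mono hmono hj
    have hb : hh μ j ≤ 2 * PP μ k - PP μ j - PP μ (j + 1) := by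
      have := PP_succ μ j; linarith
    have hd := dpos j
    have hdh : (μ (j + 1) - μ j) * hh μ j = 1 := by
      unfold hh; field_simp
    have : δ * ((μ (j + 1) - μ j) * hh μ j)
        ≤ δ * ((μ (j + 1) - μ j) * (2 * PP μ k - PP μ j - PP μ (j + 1))) := by
      apply mul_le_mul_of_nonneg_left _ hδ.le
      exact mul_le_mul_of_nonneg_left hb hd.le
    simp only [hg] at hstep ⊢
    nlinarith [hdh]
  have up : ∀ m : ℕ, g (k + m) ≤ g k - δ * m := by
    intro m
    induction m with
    | zero => simp
    | succ m ih =>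
        have h1 := step_up (k + m) (Nat.le_add_right k m)
        have : (k + (m + 1)) = (k + m) + 1 := by omega
        rw [this]
        push_cast
        push_cast at ih
        linarith
  have down : ∀ m n' : ℕ, n' + m = k → g n' ≤ g k - δ * m := by
    intro m
    induction m with
    | zero => intro n' h; subst h; simp
    | succ m ih =>
        intro n' h
        have h1 : (n' + 1) + m = k := by omega
        have h2 := ih (n' + 1) h1
        have h3 := step_down n' (by omega)
        push_cast
        push_cast at h2
        linarith
  rw [← Real.exp_sub, ← Real.exp_add, Real.exp_le_exp]
  have key : g n - g k ≤ -δ * |(n : ℝ) - (k : ℝ)| := by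
    rcases le_total k n with hkn | hnk
    · obtain ⟨m, rfl⟩ := Nat.exists_eq_add_of_le hkn
      have habs : |((k + m : ℕ) : ℝ) - (k : ℝ)| = m := by
        push_cast; rw [abs_of_nonneg] <;> [ring; linarith]
      rw [habs]
      have := up m
      linarith
    · have habs : |(n : ℝ) - (k : ℝ)| = ((k - n : ℕ) : ℝ) := by
        have : ((k - n : ℕ) : ℝ) = (k : ℝ) - n := by
          push_cast [hnk]; ring
        rw [this, abs_sub_comm, abs_of_nonneg]
        have : (n : ℝ) ≤ k := by exact_mod_cast hnk
        linarith
      rw [habs]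
      have := down (k - n) n (by omega)
      linarith
  simp only [hg] at key
  linarith
end

section
/- One has Δ_n = o(μ_n) as n → ∞; that is, Δ_n / μ_n → 0 as n → ∞. -/
/-! The tails `T_j = ∑_{m ≥ j} 1/(μ_{m+1} - μ_m)` of a convergent series tend to `0`, and
`Δ_n = δ ∑_{j<n} (T_j + T_{j+1}) (μ_{j+1} - μ_j)` weights the increments of `μ` by these vanishing
coefficients. The gaps `μ_{j+1} - μ_j` tend to infinity, so `μ_n → ∞`, and a Stolz–Cesàro
argument shows that such a weighted sum is `o(μ_n)`. -/

open Filter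

open Topology Asymptotics Finset

noncomputable def invGap (μ : ℕ → ℝ) (n : ℕ) : ℝ := 1 / (μ (n + 1) - μ n)

lemma tendsto_atTop_of_summable_one_div {a : ℕ → ℝ} (ha : ∀ n, 0 < a n)
    (hs : Summable fun n => 1 / a n) : Tendsto a atTop atTop := by
  have h0 : Tendsto (fun n => 1 / a n) atTop (𝓝[>] 0) :=
    tendsto_nhdsWithin_of_tendsto_nhds_of_eventually_within _ hs.tendsto_atTop_zero
      (Eventually.of_forall fun n => one_div_pos.mpr (ha n))
  exact h0.inv_tendsto_nhdsGT_zero.congr fun n => by simp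

lemma StrictMono.tendsto_atTop_of_summable_invGap {μ : ℕ → ℝ} (hμ : StrictMono μ)
    (hs : Summable (invGap μ)) : Tendsto μ atTop atTop := by
  have hgap : ∀ n, 0 < μ (n + 1) - μ n := fun n => sub_pos.2 (hμ n.lt_succ_self)
  have hgap_top := tendsto_atTop_of_summable_one_div hgap hs
  have hpartial : Tendsto (fun n => ∑ j ∈ range n, (μ (j + 1) - μ j)) atTop atTop :=
    (not_summable_iff_tendsto_nat_atTop_of_nonneg fun j => (hgap j).le).1
      fun h => not_tendsto_nhds_of_tendsto_atTop hgap_top 0 h.tendsto_atTop_zero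
  simp only [sum_range_sub μ] at hpartial
  simpa using tendsto_atTop_add_const_right atTop (μ 0) hpartial

lemma Monotone.isLittleO_sum_range_mul_sub {μ c : ℕ → ℝ} (hμ : Monotone μ)
    (hμ_top : Tendsto μ atTop atTop) (hc : Tendsto c atTop (𝓝 0)) :
    (fun n => ∑ j ∈ range n, c j * (μ (j + 1) - μ j)) =o[atTop] μ := by
  have hgap : ∀ j, 0 ≤ μ (j + 1) - μ j := fun j => sub_nonneg.2 (hμ j.le_succ)
  have hterm : (fun j => c j * (μ (j + 1) - μ j)) =o[atTop] fun j => μ (j + 1) - μ j := by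
    simpa using ((isLittleO_one_iff ℝ).2 hc).mul_isBigO (isBigO_refl (fun j => μ (j + 1) - μ j) _)
  have hpartial : Tendsto (fun n => ∑ j ∈ range n, (μ (j + 1) - μ j)) atTop atTop :=
    (tendsto_atTop_add_const_right atTop (-μ 0) hμ_top).congr fun n => by
      rw [sum_range_sub]; ring
  have hconst : (fun _ : ℕ => μ 0) =o[atTop] μ :=
    isLittleO_const_left.2 (Or.inr (tendsto_norm_atTop_atTop.comp hμ_top))
  have hsub : (fun n => ∑ j ∈ range n, (μ (j + 1) - μ j)) =O[atTop] μ := by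
    simpa only [sum_range_sub μ] using (isBigO_refl μ atTop).sub hconst.isBigO
  exact (hterm.sum_range hgap hpartial).trans_isBigO hsub

lemma Del_eq_sum_range (δ : ℝ) {μ : ℕ → ℝ} (hs : Summable (invGap μ)) (n : ℕ) :
    Del δ μ n = ∑ j ∈ range n,
      δ * (∑' i, invGap μ (i + j) + ∑' i, invGap μ (i + (j + 1))) * (μ (j + 1) - μ j) := by
  rw [Del, mul_sum]
  refine sum_congr rfl fun j _ => ?_
  have hterm : ∀ i, 1 / (μ (j + 1 + i) - μ (j + i)) + 1 / (μ (j + 2 + i) - μ (j + 1 + i))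
      = invGap μ (i + j) + invGap μ (i + (j + 1)) := fun i => by
    simp only [invGap, show j + 1 + i = i + j + 1 by omega,
      show j + 2 + i = i + (j + 1) + 1 by omega, add_comm j i, add_assoc]
  rw [tsum_congr hterm,
    ((summable_nat_add_iff j).2 hs).tsum_add ((summable_nat_add_iff (j + 1)).2 hs)]
  ring

theorem stmt_7_general (μ : ℕ → ℝ) (hmono : StrictMono μ)
    (hsum : Summable fun n => 1 / (μ (n + 1) - μ n))
    (δ : ℝ) :
    Tendsto (fun n => Del δ μ n / μ n) atTop (nhds 0) := by
  have hs : Summable (invGap μ) := hsum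
  have htail : Tendsto (fun j => ∑' i, invGap μ (i + j)) atTop (𝓝 0) := tendsto_sum_nat_add _
  have hcoeff : Tendsto (fun j => δ * (∑' i, invGap μ (i + j) + ∑' i, invGap μ (i + (j + 1))))
      atTop (𝓝 0) := by
    simpa using (htail.add (htail.comp (tendsto_add_atTop_nat 1))).const_mul δ
  have hΔ := hmono.monotone.isLittleO_sum_range_mul_sub
    (hmono.tendsto_atTop_of_summable_invGap hs) hcoeff
  simp only [← Del_eq_sum_range δ hs] at hΔ
  exact hΔ.tendsto_div_nhds_zero

/-- `Δ_n = o(μ_n)` as `n → ∞`, i.e. `Δ_n / μ_n → 0`. -/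
theorem stmt_7 (μ : ℕ → ℝ) (hmono : StrictMono μ)
    (hsum : Summable fun n => 1 / (μ (n + 1) - μ n))
    (δ : ℝ) (hδ : 0 < δ) :
    Tendsto (fun n => Del δ μ n / μ n) atTop (nhds 0) :=
  stmt_7_general μ hmono hsum δ
end

section
/- Let F ∈ D_a be entire with μ_n := −ln|a_n| strictly increasing and ∑_n 1/(μ_{n+1} − μ_n) < +∞, let δ > 0, and let Δ_n be as defined. Then for every q ∈ ℝ the series f_q(σ) = ∑_{n=0}^∞ e^{λ_n − q Δ_n} e^{σ μ_n} converges (absolutely) for every σ < 0 and diverges for every σ > 0. -/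
open Filter

/-!
The gaps `μ (n + 1) - μ n` tend to infinity because their reciprocals are summable; hence
`μ n → ∞` and, by the ratio test, `∑ exp (-c μ n)` converges for every `c > 0`.
Entireness forces `λ n = o(μ n)`, and `Δ n = o(μ n)` because `Δ n / δ` is the weighted sum
`∑_{j<n} (μ (j + 1) - μ j) r j` of tails `r j → 0` of a convergent series, whose weights add up
to `μ n - μ 0`. So the exponent `λ n - q Δ n + σ μ n` is `(σ + o(1)) μ n`: the terms decay
geometrically along `μ` when `σ < 0` and tend to infinity when `σ > 0`.
-/

open Asymptotics Real Finset Topology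

section Gaps

variable {μ : ℕ → ℝ}

theorem tendsto_sub_atTop_of_summable_one_div (hμ : StrictMono μ)
    (hs : Summable fun n => 1 / (μ (n + 1) - μ n)) :
    Tendsto (fun n => μ (n + 1) - μ n) atTop atTop := by
  have hpos : ∀ n, 0 < 1 / (μ (n + 1) - μ n) := fun n =>
    one_div_pos.2 (sub_pos.2 (hμ n.lt_succ_self))
  have h0 : Tendsto (fun n => 1 / (μ (n + 1) - μ n)) atTop (𝓝[>] 0) :=
    tendsto_nhdsWithin_iff.2 ⟨hs.tendsto_atTop_zero, Eventually.of_forall hpos⟩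
  refine h0.inv_tendsto_nhdsGT_zero.congr fun n => ?_
  simp

theorem summable_exp_neg_mul_of_tendsto_sub
    (hgap : Tendsto (fun n => μ (n + 1) - μ n) atTop atTop) {c : ℝ} (hc : 0 < c) :
    Summable fun n => exp (-(c * μ n)) := by
  refine summable_of_ratio_test_tendsto_lt_one zero_lt_one
    (Eventually.of_forall fun n => (exp_pos _).ne') ?_
  have h : Tendsto (fun n => exp (-(c * (μ (n + 1) - μ n)))) atTop (𝓝 0) :=
    tendsto_exp_comp_nhds_zero.2 (tendsto_neg_atTop_atBot.comp (hgap.const_mul_atTop hc))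
  refine h.congr fun n => ?_
  rw [norm_of_nonneg (exp_pos _).le, norm_of_nonneg (exp_pos _).le, ← exp_sub]
  ring_nf

theorem tendsto_atTop_of_tendsto_sub (hgap : Tendsto (fun n => μ (n + 1) - μ n) atTop atTop) :
    Tendsto μ atTop atTop := by
  have h := (summable_exp_neg_mul_of_tendsto_sub hgap one_pos).tendsto_atTop_zero
  simpa using tendsto_neg_atBot_iff.1 (tendsto_exp_comp_nhds_zero.1 h)

end Gaps

theorem tendsto_tsum_add_shift_zero {u : ℕ → ℝ} (hu : Summable u) :
    Tendsto (fun j => ∑' i, (u (j + i) + u (j + 1 + i))) atTop (𝓝 0) := by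
  have hsum : ∀ j, Summable fun i => u (j + i) := fun j => by
    simpa only [add_comm] using (summable_nat_add_iff j).2 hu
  have htail : Tendsto (fun j => ∑' i, u (j + i)) atTop (𝓝 0) := by
    simpa only [add_comm] using tendsto_sum_nat_add u
  simpa only [(hsum _).tsum_add (hsum _), add_zero, Function.comp_def] using
    htail.add (htail.comp (tendsto_add_atTop_nat 1))

theorem isLittleO_Del (δ : ℝ) {μ : ℕ → ℝ} (hμ : StrictMono μ)
    (hs : Summable fun n => 1 / (μ (n + 1) - μ n)) : Del δ μ =o[atTop] μ := by
  set d := fun n => μ (n + 1) - μ n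
  set r := fun j => ∑' i : ℕ,
    (1 / (μ (j + 1 + i) - μ (j + i)) + 1 / (μ (j + 2 + i) - μ (j + 1 + i)))
  have hμtop := tendsto_atTop_of_tendsto_sub (tendsto_sub_atTop_of_summable_one_div hμ hs)
  have hr : Tendsto r atTop (𝓝 0) := by
    refine (tendsto_tsum_add_shift_zero hs).congr fun j => tsum_congr fun i => ?_
    rw [show j + 1 + i = j + i + 1 by omega, show j + 2 + i = j + i + 1 + 1 by omega]
  have hd : ∀ n, ∑ j ∈ range n, d j = μ n - μ 0 := sum_range_sub μ
  have hdr : (fun n => ∑ j ∈ range n, d j * r j) =o[atTop] fun n => μ n - μ 0 := by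
    have hrd : (fun j => d j * r j) =o[atTop] d := by
      simpa only [one_mul, mul_comm (r _)] using
        ((isLittleO_one_iff ℝ).2 hr).mul_isBigO (isBigO_refl d atTop)
    simpa only [hd] using hrd.sum_range (fun j => (sub_pos.2 (hμ j.lt_succ_self)).le)
      (by simpa only [hd, sub_eq_add_neg] using tendsto_atTop_add_const_right _ _ hμtop)
  have hμ0 : (fun n => μ n - μ 0) =O[atTop] μ :=
    (isBigO_refl μ _).sub
      (isLittleO_const_left.2 (Or.inr (tendsto_norm_atTop_atTop.comp hμtop))).isBigO
  exact (hdr.trans_isBigO hμ0).const_mul_left δ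

theorem isLittleO_of_summable_exp_neg_mul_exp {lam μ : ℕ → ℝ} (hlam : ∀ n, 0 ≤ lam n)
    (hμ : Tendsto μ atTop atTop)
    (hs : ∀ x : ℝ, Summable fun n => exp (-μ n) * exp (x * lam n)) : lam =o[atTop] μ := by
  refine IsLittleO.of_bound fun c hc => ?_
  filter_upwards [(hs c⁻¹).tendsto_atTop_zero.eventually (gt_mem_nhds one_pos),
    hμ.eventually_ge_atTop 0] with n hn hμn
  rw [← exp_add, exp_lt_one_iff, neg_add_lt_iff_lt_add, add_zero, inv_mul_lt_iff₀ hc] at hn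
  rw [norm_of_nonneg (hlam n), norm_of_nonneg hμn]
  exact hn.le

section Exponent

variable {g μ : ℕ → ℝ}

theorem summable_exp_mul_exp_of_neg (hg : g =o[atTop] μ)
    (hgap : Tendsto (fun n => μ (n + 1) - μ n) atTop atTop) {σ : ℝ} (hσ : σ < 0) :
    Summable fun n => exp (g n) * exp (σ * μ n) := by
  have hσ2 : 0 < -σ / 2 := by linarith
  refine (summable_exp_neg_mul_of_tendsto_sub hgap hσ2).of_norm_bounded_eventually_nat ?_
  filter_upwards [hg.bound hσ2, (tendsto_atTop_of_tendsto_sub hgap).eventually_ge_atTop 0]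
    with n hgn hμn
  rw [norm_of_nonneg hμn, norm_eq_abs] at hgn
  rw [norm_of_nonneg (by positivity), ← exp_add, exp_le_exp]
  linarith [le_abs_self (g n), hgn]

theorem not_summable_exp_mul_exp_of_pos (hg : g =o[atTop] μ) (hμ : Tendsto μ atTop atTop)
    {σ : ℝ} (hσ : 0 < σ) :
    ¬ Summable fun n => exp (g n) * exp (σ * μ n) := by
  intro h
  have hexp : Tendsto (fun n => g n + σ * μ n) atTop atTop :=
    ((hg.const_mul_right' (isUnit_iff_ne_zero.2 hσ.ne')).add_isEquivalent
      (IsEquivalent.refl)).symm.tendsto_atTop (hμ.const_mul_atTop hσ)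
  refine not_tendsto_nhds_of_tendsto_atTop (tendsto_exp_atTop.comp hexp) 0 ?_
  simpa only [Function.comp_def, exp_add] using h.tendsto_atTop_zero

end Exponent

theorem stmt_11_general (a : ℕ → ℂ) (lam : ℕ → ℝ)
    (hlam0 : ∀ n, 0 ≤ lam n)
    (hentire : ∀ x : ℝ, Summable fun n => ‖a n‖ * Real.exp (x * lam n))
    (hne : ∀ n, a n ≠ 0)
    (μ : ℕ → ℝ) (hμ : ∀ n, μ n = -Real.log (‖a n‖))
    (hμmono : StrictMono μ)
    (hsum : Summable fun n => 1 / (μ (n + 1) - μ n))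
    (δ : ℝ) :
    ∀ q : ℝ,
      (∀ σ : ℝ, σ < 0 →
        Summable fun n => Real.exp (lam n - q * Del δ μ n) * Real.exp (σ * μ n)) ∧
      (∀ σ : ℝ, 0 < σ →
        ¬ Summable fun n => Real.exp (lam n - q * Del δ μ n) * Real.exp (σ * μ n)) := by
  intro q
  have hgap := tendsto_sub_atTop_of_summable_one_div hμmono hsum
  have hμtop := tendsto_atTop_of_tendsto_sub hgap
  have hnorm : ∀ n, ‖a n‖ = exp (-μ n) := fun n => by
    rw [hμ, neg_neg, exp_log (norm_pos_iff.2 (hne n))]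
  have hlam : lam =o[atTop] μ :=
    isLittleO_of_summable_exp_neg_mul_exp hlam0 hμtop (by simpa only [hnorm] using hentire)
  have hg : (fun n => lam n - q * Del δ μ n) =o[atTop] μ :=
    hlam.sub ((isLittleO_Del δ hμmono hsum).const_mul_left q)
  exact ⟨fun σ hσ => summable_exp_mul_exp_of_neg hg hgap hσ,
    fun σ hσ => not_summable_exp_mul_exp_of_pos hg hμtop hσ⟩

/-- If `F ∈ D_a` is entire, `μ_n := −ln|a_n|` is strictly increasing with
`∑ 1/(μ_{n+1}−μ_n) < ∞`, and `δ > 0`, then for every `q ∈ ℝ` the Dirichlet series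
`f_q(σ) = ∑ (e^{λ_n}/α_n^q) e^{σ μ_n}` (`α_n = e^{Δ_n}`) converges absolutely for every
`σ < 0` and diverges for every `σ > 0`. -/
theorem stmt_11 (a : ℕ → ℂ) (lam : ℕ → ℝ)
    (hdist : ∀ n m, n ≠ m → lam n ≠ lam m)
    (hlam0 : ∀ n, 0 ≤ lam n)
    (hlamsup : ∀ n, ∃ m, lam n < lam m)
    (hentire : ∀ x : ℝ, Summable fun n => ‖a n‖ * Real.exp (x * lam n))
    (hne : ∀ n, a n ≠ 0) (n0 : ℕ)
    (hdec : ∀ n ≥ n0, ‖a (n + 1)‖ < ‖a n‖)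
    (hto0 : Tendsto (fun n => ‖a n‖) atTop (nhds 0))
    (μ : ℕ → ℝ) (hμ : ∀ n, μ n = -Real.log (‖a n‖))
    (hμmono : StrictMono μ)
    (hsum : Summable fun n => 1 / (μ (n + 1) - μ n))
    (δ : ℝ) (hδ : 0 < δ) :
    ∀ q : ℝ,
      (∀ σ : ℝ, σ < 0 →
        Summable fun n => Real.exp (lam n - q * Del δ μ n) * Real.exp (σ * μ n)) ∧
      (∀ σ : ℝ, 0 < σ →
        ¬ Summable fun n => Real.exp (lam n - q * Del δ μ n) * Real.exp (σ * μ n)) :=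
  stmt_11_general a lam hlam0 hentire hne μ hμ hμmono hsum δ
end

section
/- Let F ∈ D_a be entire with μ_n := −ln|a_n| strictly increasing, μ_n > 0 for all n, and ∑_n 1/(μ_{n+1} − μ_n) < +∞; let δ > 0 and let Δ_n be as defined, and set μ*_n := μ_n + Δ_n. Then the series f*(σ) = ∑_{n=0}^∞ e^{λ_n} e^{σ μ*_n} converges (absolutely) for every σ < 0 and diverges for every σ ≥ 0; i.e. f* converges exactly in the half-plane Re s < 0 and its abscissa of absolute convergence equals 0. -/
/-!
The terms of `f*` are `exp (λ_n + σ μ*_n)` with `μ*_n ≥ μ_n > 0`. For `σ ≥ 0` every term is at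
least `1`. For `σ < 0`, entireness of `F` gives `λ_n ≤ (-σ/2) μ_n` for large `n`, so the terms
are eventually at most `exp (σ μ_n / 2)`; summability of `1/(μ_{n+1} - μ_n)` forces the gaps
`μ_{n+1} - μ_n` to infinity, and the ratio test finishes.
-/

open Filter

open Real

lemma norm_eq_exp_neg_of_eq_neg_log {E : Type*} [NormedAddCommGroup E] {a : E} {m : ℝ}
    (hm : m = -log ‖a‖) (hpos : 0 < m) : ‖a‖ = exp (-m) := by
  have ha : a ≠ 0 := by
    rintro rfl
    simp only [norm_zero, log_zero, neg_zero] at hm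
    exact hpos.ne' hm
  rw [hm, neg_neg, exp_log (norm_pos_iff.mpr ha)]

lemma Del_nonneg {δ : ℝ} {μ : ℕ → ℝ} (hδ : 0 ≤ δ) (hμ : Monotone μ) (n : ℕ) :
    0 ≤ Del δ μ n := by
  refine mul_nonneg hδ (Finset.sum_nonneg fun j _ => ?_)
  refine mul_nonneg (sub_nonneg.mpr (hμ j.le_succ)) (tsum_nonneg fun i => ?_)
  have h₁ : 0 ≤ μ (j + 1 + i) - μ (j + i) := sub_nonneg.mpr (hμ (by omega))
  have h₂ : 0 ≤ μ (j + 2 + i) - μ (j + 1 + i) := sub_nonneg.mpr (hμ (by omega))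
  positivity

lemma eventually_le_mul_of_summable_exp {lam μ : ℕ → ℝ}
    (hgrowth : ∀ x, Summable fun n => exp (x * lam n - μ n)) {ε : ℝ} (hε : 0 < ε) :
    ∀ᶠ n in atTop, lam n ≤ ε * μ n := by
  filter_upwards [(hgrowth ε⁻¹).tendsto_atTop_zero.eventually (gt_mem_nhds one_pos)] with n hn
  have hneg : ε⁻¹ * lam n - μ n < 0 := exp_lt_one_iff.mp hn
  have : ε⁻¹ * lam n < μ n := by linarith
  rw [inv_mul_lt_iff₀ hε] at this
  exact this.le

lemma summable_exp_neg_mul_of_summable_inv_gap {μ : ℕ → ℝ} (hμ : StrictMono μ)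
    (hgap : Summable fun n => 1 / (μ (n + 1) - μ n)) {ε : ℝ} (hε : 0 < ε) :
    Summable fun n => exp (-(ε * μ n)) := by
  refine summable_of_ratio_norm_eventually_le (r := exp (-1)) (by simp) ?_
  filter_upwards [hgap.tendsto_atTop_zero.eventually (gt_mem_nhds hε)] with n hn
  have hpos : 0 < μ (n + 1) - μ n := sub_pos.mpr (hμ n.lt_succ_self)
  have hlarge : 1 ≤ ε * (μ (n + 1) - μ n) := by
    rw [div_lt_iff₀ hpos] at hn
    exact hn.le
  rw [norm_of_nonneg (exp_nonneg _), norm_of_nonneg (exp_nonneg _), ← exp_add, exp_le_exp]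
  linarith

lemma summable_exp_mul_exp_of_neg_s12 {lam μ ν : ℕ → ℝ}
    (hgrowth : ∀ x, Summable fun n => exp (x * lam n - μ n)) (hμ : StrictMono μ)
    (hgap : Summable fun n => 1 / (μ (n + 1) - μ n)) (hν : ∀ n, μ n ≤ ν n)
    {σ : ℝ} (hσ : σ < 0) :
    Summable fun n => exp (lam n) * exp (σ * ν n) := by
  have hε : 0 < -σ / 2 := by linarith
  refine (summable_exp_neg_mul_of_summable_inv_gap hμ hgap hε).of_norm_bounded_eventually_nat ?_
  filter_upwards [eventually_le_mul_of_summable_exp hgrowth hε] with n hn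
  rw [← exp_add, norm_of_nonneg (exp_nonneg _), exp_le_exp]
  nlinarith [hν n]

lemma not_summable_of_one_le {f : ℕ → ℝ} (hf : ∀ n, 1 ≤ f n) : ¬ Summable f := fun h =>
  ((h.tendsto_atTop_zero.eventually (gt_mem_nhds one_pos)).exists.elim fun n hn =>
    (hf n).not_gt hn)

theorem stmt_12_general (a : ℕ → ℂ) (lam : ℕ → ℝ)
    (hlam0 : ∀ n, 0 ≤ lam n)
    (hentire : ∀ x : ℝ, Summable fun n => ‖a n‖ * Real.exp (x * lam n))
    (μ : ℕ → ℝ) (hμ : ∀ n, μ n = -Real.log (‖a n‖))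
    (hμpos : ∀ n, 0 < μ n) (hμmono : StrictMono μ)
    (hsum : Summable fun n => 1 / (μ (n + 1) - μ n))
    (δ : ℝ) (hδ : 0 < δ) :
    (∀ σ : ℝ, σ < 0 →
      Summable fun n => Real.exp (lam n) * Real.exp (σ * (μ n + Del δ μ n))) ∧
    (∀ σ : ℝ, 0 ≤ σ →
      ¬ Summable fun n => Real.exp (lam n) * Real.exp (σ * (μ n + Del δ μ n))) := by
  have hDel : ∀ n, 0 ≤ Del δ μ n := Del_nonneg hδ.le hμmono.monotone
  have hgrowth : ∀ x, Summable fun n => exp (x * lam n - μ n) := fun x =>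
    (hentire x).congr fun n => by
      rw [norm_eq_exp_neg_of_eq_neg_log (hμ n) (hμpos n), ← exp_add, neg_add_eq_sub]
  refine ⟨fun σ hσ => summable_exp_mul_exp_of_neg_s12 hgrowth hμmono hsum
    (fun n => le_add_of_nonneg_right (hDel n)) hσ, fun σ hσ => not_summable_of_one_le fun n => ?_⟩
  have hexp : 0 ≤ σ * (μ n + Del δ μ n) := mul_nonneg hσ (by linarith [hμpos n, hDel n])
  exact one_le_mul_of_one_le_of_one_le (one_le_exp (hlam0 n)) (one_le_exp hexp)

/-- If `F ∈ D_a` is entire, `μ_n := −ln|a_n|` is positive and strictly increasing with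
`∑ 1/(μ_{n+1}−μ_n) < ∞`, and `δ > 0`, then the Dirichlet series
`f*(σ) = ∑ e^{λ_n} e^{σ μ*_n}` with `μ*_n := μ_n + Δ_n` converges absolutely for every
`σ < 0` and diverges for every `σ ≥ 0`: it converges exactly in the half-plane
`Re s < 0` and its abscissa of absolute convergence equals `0`. -/
theorem stmt_12 (a : ℕ → ℂ) (lam : ℕ → ℝ)
    (hdist : ∀ n m, n ≠ m → lam n ≠ lam m)
    (hlam0 : ∀ n, 0 ≤ lam n)
    (hlamsup : ∀ n, ∃ m, lam n < lam m)
    (hentire : ∀ x : ℝ, Summable fun n => ‖a n‖ * Real.exp (x * lam n))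
    (hne : ∀ n, a n ≠ 0) (n0 : ℕ)
    (hdec : ∀ n ≥ n0, ‖a (n + 1)‖ < ‖a n‖)
    (hto0 : Tendsto (fun n => ‖a n‖) atTop (nhds 0))
    (μ : ℕ → ℝ) (hμ : ∀ n, μ n = -Real.log (‖a n‖))
    (hμpos : ∀ n, 0 < μ n) (hμmono : StrictMono μ)
    (hsum : Summable fun n => 1 / (μ (n + 1) - μ n))
    (δ : ℝ) (hδ : 0 < δ) :
    (∀ σ : ℝ, σ < 0 →
      Summable fun n => Real.exp (lam n) * Real.exp (σ * (μ n + Del δ μ n))) ∧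
    (∀ σ : ℝ, 0 ≤ σ →
      ¬ Summable fun n => Real.exp (lam n) * Real.exp (σ * (μ n + Del δ μ n))) :=
  stmt_12_general a lam hlam0 hentire μ hμ hμpos hμmono hsum δ hδ
end

section
/- Let F ∈ D_a with μ_n := −ln|a_n| strictly increasing and ∑_n 1/(μ_{n+1} − μ_n) < +∞, let δ > 0, and let Δ_n, τ_k be as defined (so τ_k < 0 for k ≥ 1). Suppose σ < 0 and k ≥ 1 are such that λ_n + σ(μ_n + Δ_n) ≤ λ_k + σ(μ_k + Δ_k) for all n ≥ 0. Then for x := 1/( |σ| (1 + |τ_k|) ) one has, for every n ≥ 0, |a_n| e^{x λ_n} ≤ |a_k| e^{x λ_k} · exp( −δ |n−k| / (1 + |τ_k|) ); in particular μ(x,F) = |a_k| e^{x λ_k} and ν(x,F) = k. -/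
/-! Write `R_j := ∑_{m > j} 1/(μ_m − μ_{m−1})`. Then `Δ_{n+1} − Δ_n = δ (μ_{n+1} − μ_n)(R_n + R_{n+1})`
and `τ_k = −2δR_k`. Since `R` drops by exactly `1/(μ_{n+1} − μ_n)` from `n` to `n + 1`, the sequence
`Δ_n − |τ_k| μ_n` rises by at least `δ` at each step up to `k` and falls by at least `δ` after it,
that is `Δ_n − Δ_k + δ|n − k| ≤ |τ_k| (μ_n − μ_k)`. Combined with the maximality of
`λ_k + σ(μ_k + Δ_k)` and divided by `|σ|(1 + |τ_k|)`, this bounds `−μ_n + xλ_n`, the logarithm of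
`|a_n| e^{xλ_n}`; the factor `e^{−δ|n−k|/(1+|τ_k|)}` is `< 1` for `n ≠ k`. -/

open Filter

lemma add_mul_abs_sub_le_of_steps {f : ℕ → ℝ} {δ : ℝ} {k : ℕ}
    (hup : ∀ n < k, f n + δ ≤ f (n + 1)) (hdown : ∀ n ≥ k, f (n + 1) + δ ≤ f n) (n : ℕ) :
    f n + δ * |(n : ℝ) - k| ≤ f k := by
  rcases le_total n k with hnk | hkn
  · have hrise : ∀ m, n ≤ m → m ≤ k → f n + δ * ((m : ℝ) - n) ≤ f m := by
      intro m hnm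
      induction m, hnm using Nat.le_induction with
      | base => simp
      | succ m hnm ih =>
        intro hmk
        push_cast
        linarith [ih (by omega), hup m (by omega)]
    rw [abs_sub_comm, abs_of_nonneg (sub_nonneg.2 (by exact_mod_cast hnk))]
    exact hrise k hnk le_rfl
  · rw [abs_of_nonneg (sub_nonneg.2 (by exact_mod_cast hkn))]
    induction n, hkn using Nat.le_induction with
    | base => simp
    | succ n hkn ih =>
      push_cast
      linarith [hdown n hkn]

/-- `gapTail μ j = ∑_{m > j} 1 / (μ_m - μ_{m-1})`; the inner sum in `Del δ μ` at `j` is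
`gapTail μ j + gapTail μ (j + 1)`. -/
noncomputable def gapTail (μ : ℕ → ℝ) (j : ℕ) : ℝ :=
  ∑' i : ℕ, 1 / (μ (j + 1 + i) - μ (j + i))

section gapTail

variable {μ : ℕ → ℝ}

lemma summable_gapTail_term (hsum : Summable fun n => 1 / (μ (n + 1) - μ n)) (j : ℕ) :
    Summable fun i => 1 / (μ (j + 1 + i) - μ (j + i)) := by
  refine ((summable_nat_add_iff j).2 hsum).congr fun i => ?_
  rw [add_comm i j, add_right_comm]

lemma gapTail_eq_add (hsum : Summable fun n => 1 / (μ (n + 1) - μ n)) (j : ℕ) :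
    gapTail μ j = 1 / (μ (j + 1) - μ j) + gapTail μ (j + 1) := by
  rw [gapTail, (summable_gapTail_term hsum j).tsum_eq_zero_add, gapTail]
  congr 2 with i
  ring_nf

lemma gapTail_nonneg (hμ : Monotone μ) (j : ℕ) : 0 ≤ gapTail μ j :=
  tsum_nonneg fun i => one_div_nonneg.2 (sub_nonneg.2 (hμ (by omega)))

lemma gapTail_antitone (hμ : Monotone μ) (hsum : Summable fun n => 1 / (μ (n + 1) - μ n)) :
    Antitone (gapTail μ) := by
  refine antitone_nat_of_succ_le fun j => ?_
  have hgap : 0 ≤ 1 / (μ (j + 1) - μ j) := one_div_nonneg.2 (sub_nonneg.2 (hμ j.le_succ))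
  linarith [gapTail_eq_add hsum j]

lemma Del_succ_sub (hsum : Summable fun n => 1 / (μ (n + 1) - μ n)) (δ : ℝ) (n : ℕ) :
    Del δ μ (n + 1) - Del δ μ n = δ * (μ (n + 1) - μ n) * (gapTail μ n + gapTail μ (n + 1)) := by
  rw [Del, Del, Finset.sum_range_succ, gapTail, gapTail,
    ← (summable_gapTail_term hsum n).tsum_add (summable_gapTail_term hsum (n + 1))]
  ring

lemma tauk_succ (hμ : StrictMono μ) (hsum : Summable fun n => 1 / (μ (n + 1) - μ n))
    (δ : ℝ) (m : ℕ) : tauk δ μ (m + 1) = -(2 * δ * gapTail μ (m + 1)) := by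
  have hgap : μ (m + 1) - μ m ≠ 0 := (sub_pos.2 (hμ m.lt_succ_self)).ne'
  have hstep := Del_succ_sub hsum δ m
  rw [gapTail_eq_add hsum m] at hstep
  rw [tauk, tk, Nat.add_sub_cancel, show Del δ μ m - Del δ μ (m + 1) = -(δ * (μ (m + 1) - μ m) *
    (1 / (μ (m + 1) - μ m) + 2 * gapTail μ (m + 1))) by linear_combination -hstep]
  field_simp
  ring

lemma Del_sub_mul_add_le (hμ : StrictMono μ) (hsum : Summable fun n => 1 / (μ (n + 1) - μ n))
    {δ : ℝ} (hδ : 0 ≤ δ) (k n : ℕ) :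
    Del δ μ n - 2 * δ * gapTail μ k * μ n + δ * |(n : ℝ) - k| ≤
      Del δ μ k - 2 * δ * gapTail μ k * μ k := by
  have hanti := gapTail_antitone hμ.monotone hsum
  have hd : ∀ n, 0 < μ (n + 1) - μ n := fun n => sub_pos.2 (hμ n.lt_succ_self)
  have hstep : ∀ n, Del δ μ (n + 1) - 2 * δ * gapTail μ k * μ (n + 1) -
      (Del δ μ n - 2 * δ * gapTail μ k * μ n) =
      2 * δ * ((μ (n + 1) - μ n) * (gapTail μ (n + 1) - gapTail μ k)) + δ := by
    intro n
    have hDel := Del_succ_sub hsum δ n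
    rw [gapTail_eq_add hsum n] at hDel
    linear_combination hDel + δ * mul_one_div_cancel (hd n).ne'
  refine add_mul_abs_sub_le_of_steps (f := fun n => Del δ μ n - 2 * δ * gapTail μ k * μ n)
    (fun n hn => ?_) (fun n hn => ?_) n
  · have hrise : 0 ≤ (μ (n + 1) - μ n) * (gapTail μ (n + 1) - gapTail μ k) :=
      mul_nonneg (hd n).le (sub_nonneg.2 (hanti hn))
    linarith [hstep n, mul_nonneg (by positivity : (0 : ℝ) ≤ 2 * δ) hrise]
  · have hdrop : (μ (n + 1) - μ n) * (gapTail μ (n + 1) - gapTail μ k) ≤ -1 :=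
      calc (μ (n + 1) - μ n) * (gapTail μ (n + 1) - gapTail μ k)
          ≤ (μ (n + 1) - μ n) * -(1 / (μ (n + 1) - μ n)) :=
            mul_le_mul_of_nonneg_left (by linarith [gapTail_eq_add hsum n, hanti hn]) (hd n).le
        _ = -1 := by field_simp [(hd n).ne']
    linarith [hstep n, mul_le_mul_of_nonneg_left hdrop (by positivity : (0 : ℝ) ≤ 2 * δ)]

end gapTail

lemma neg_add_one_div_mul_le_of_le {σ c e lamn lamk μn μk Dn Dk : ℝ} (hσ : σ < 0) (hc : 0 < c)
    (hmax : lamn + σ * (μn + Dn) ≤ lamk + σ * (μk + Dk))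
    (hD : Dn - Dk + e ≤ (c - 1) * (μn - μk)) :
    -μn + 1 / (|σ| * c) * lamn ≤ -μk + 1 / (|σ| * c) * lamk - e / c := by
  have hlam : lamn - lamk ≤ -σ * (c * (μn - μk) - e) := by nlinarith
  have hscale : 1 / (|σ| * c) * (-σ * (c * (μn - μk) - e)) = μn - μk - e / c := by
    have := hσ.ne
    rw [abs_of_neg hσ]
    field_simp
  have := mul_le_mul_of_nonneg_left hlam (by positivity : 0 ≤ 1 / (|σ| * c))
  linarith

lemma isGreatest_range_and_eq_of_le_mul_exp {u : ℕ → ℝ} {δ c : ℝ} {k : ℕ} (hδ : 0 < δ)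
    (hc : 0 < c) (hk : 0 < u k) (hu : ∀ n, u n ≤ u k * Real.exp (-δ * |(n : ℝ) - k| / c)) :
    IsGreatest (Set.range u) (u k) ∧ ∀ n, u n = u k → n = k := by
  have hexp : ∀ n, Real.exp (-δ * |(n : ℝ) - k| / c) ≤ 1 := fun n =>
    Real.exp_le_one_iff.2 (div_nonpos_of_nonpos_of_nonneg
      (mul_nonpos_of_nonpos_of_nonneg (by linarith) (abs_nonneg _)) hc.le)
  refine ⟨⟨⟨k, rfl⟩, ?_⟩, fun n hn => ?_⟩
  · rintro _ ⟨n, rfl⟩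
    simpa using (hu n).trans (mul_le_mul_of_nonneg_left (hexp n) hk.le)
  · by_contra hnk
    have hdist : 0 < |(n : ℝ) - k| := abs_pos.2 (sub_ne_zero.2 (by exact_mod_cast hnk))
    have hlt : Real.exp (-δ * |(n : ℝ) - k| / c) < 1 :=
      Real.exp_lt_one_iff.2 (div_neg_of_neg_of_pos (by nlinarith) hc)
    have := (hu n).trans_lt ((mul_lt_mul_of_pos_left hlt hk).trans_eq (mul_one _))
    exact this.ne hn

theorem stmt_13_general (a : ℕ → ℂ) (lam : ℕ → ℝ)
    (hne : ∀ n, a n ≠ 0)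
    (μ : ℕ → ℝ) (hμ : ∀ n, μ n = -Real.log (‖a n‖))
    (hμmono : StrictMono μ)
    (hsum : Summable fun n => 1 / (μ (n + 1) - μ n))
    (δ : ℝ) (hδ : 0 < δ)
    (σ : ℝ) (hσ : σ < 0) (k : ℕ) (hk : 1 ≤ k)
    (hmax : ∀ n, lam n + σ * (μ n + Del δ μ n) ≤ lam k + σ * (μ k + Del δ μ k)) :
    (∀ n, ‖a n‖ * Real.exp ((1 / (|σ| * (1 + |tauk δ μ k|))) * lam n) ≤
        ‖a k‖ * Real.exp ((1 / (|σ| * (1 + |tauk δ μ k|))) * lam k) *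
          Real.exp (-δ * |(n : ℝ) - (k : ℝ)| / (1 + |tauk δ μ k|))) ∧
    IsGreatest
      (Set.range fun n =>
        ‖a n‖ * Real.exp ((1 / (|σ| * (1 + |tauk δ μ k|))) * lam n))
      (‖a k‖ * Real.exp ((1 / (|σ| * (1 + |tauk δ μ k|))) * lam k)) ∧
    (∀ n, ‖a n‖ * Real.exp ((1 / (|σ| * (1 + |tauk δ μ k|))) * lam n) =
        ‖a k‖ * Real.exp ((1 / (|σ| * (1 + |tauk δ μ k|))) * lam k) → n ≤ k) := by
  have hτ : |tauk δ μ k| = 2 * δ * gapTail μ k := by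
    obtain ⟨m, rfl⟩ : ∃ m, k = m + 1 := ⟨k - 1, by omega⟩
    rw [tauk_succ hμmono hsum, abs_neg,
      abs_of_nonneg (by have := gapTail_nonneg hμmono.monotone (m + 1); positivity)]
  have hnorm : ∀ n, ‖a n‖ = Real.exp (-μ n) := fun n => by
    rw [hμ, neg_neg, Real.exp_log (norm_pos_iff.2 (hne n))]
  have hbound : ∀ n, ‖a n‖ * Real.exp ((1 / (|σ| * (1 + |tauk δ μ k|))) * lam n) ≤
      ‖a k‖ * Real.exp ((1 / (|σ| * (1 + |tauk δ μ k|))) * lam k) *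
        Real.exp (-δ * |(n : ℝ) - (k : ℝ)| / (1 + |tauk δ μ k|)) := fun n => by
    simp only [hnorm, ← Real.exp_add, Real.exp_le_exp, neg_mul, neg_div]
    refine neg_add_one_div_mul_le_of_le hσ (by positivity) (hmax n) ?_
    rw [add_sub_cancel_left, hτ]
    linarith [Del_sub_mul_add_le hμmono hsum hδ.le k n]
  obtain ⟨hgreatest, heq⟩ := isGreatest_range_and_eq_of_le_mul_exp hδ (by positivity)
    (by rw [hnorm]; positivity) hbound
  exact ⟨hbound, hgreatest, fun n hn => (heq n hn).le⟩

/-- If `k` is the index of the maximal term of `f*` at `σ < 0` (i.e.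
`λ_n + σ μ*_n ≤ λ_k + σ μ*_k` for all `n`, where `μ*_n = μ_n + Δ_n`), then at the point
`x := 1/(|σ|(1+|τ_k|))` one has `|a_n| e^{xλ_n} ≤ |a_k| e^{xλ_k} e^{−δ|n−k|/(1+|τ_k|)}`
for all `n`; in particular `μ(x,F) = |a_k| e^{xλ_k}` and `ν(x,F) = k`. -/
theorem stmt_13 (a : ℕ → ℂ) (lam : ℕ → ℝ)
    (hdist : ∀ n m, n ≠ m → lam n ≠ lam m)
    (hlam0 : ∀ n, 0 ≤ lam n)
    (hlamsup : ∀ n, ∃ m, lam n < lam m)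
    (hne : ∀ n, a n ≠ 0) (n0 : ℕ)
    (hdec : ∀ n ≥ n0, ‖a (n + 1)‖ < ‖a n‖)
    (hto0 : Tendsto (fun n => ‖a n‖) atTop (nhds 0))
    (μ : ℕ → ℝ) (hμ : ∀ n, μ n = -Real.log (‖a n‖))
    (hμmono : StrictMono μ)
    (hsum : Summable fun n => 1 / (μ (n + 1) - μ n))
    (δ : ℝ) (hδ : 0 < δ)
    (σ : ℝ) (hσ : σ < 0) (k : ℕ) (hk : 1 ≤ k)
    (hmax : ∀ n, lam n + σ * (μ n + Del δ μ n) ≤ lam k + σ * (μ k + Del δ μ k)) :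
    (∀ n, ‖a n‖ * Real.exp ((1 / (|σ| * (1 + |tauk δ μ k|))) * lam n) ≤
        ‖a k‖ * Real.exp ((1 / (|σ| * (1 + |tauk δ μ k|))) * lam k) *
          Real.exp (-δ * |(n : ℝ) - (k : ℝ)| / (1 + |tauk δ μ k|))) ∧
    IsGreatest
      (Set.range fun n =>
        ‖a n‖ * Real.exp ((1 / (|σ| * (1 + |tauk δ μ k|))) * lam n))
      (‖a k‖ * Real.exp ((1 / (|σ| * (1 + |tauk δ μ k|))) * lam k)) ∧
    (∀ n, ‖a n‖ * Real.exp ((1 / (|σ| * (1 + |tauk δ μ k|))) * lam n) =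
        ‖a k‖ * Real.exp ((1 / (|σ| * (1 + |tauk δ μ k|))) * lam k) → n ≤ k) :=
  stmt_13_general a lam hne μ hμ hμmono hsum δ hδ σ hσ k hk hmax
end

section
/- Let F ∈ D be entire, let x ∈ ℝ, k := ν(x,F), and δ > 0. If |a_n| e^{x λ_n} ≤ μ(x,F) · e^{−(δ/2)|n−k|} for every n ≠ k, then for every y ∈ ℝ: |F(x+iy) − a_k e^{(x+iy) λ_k}| ≤ ( 2 e^{−δ/2} / (1 − e^{−δ/2}) ) · μ(x,F). -/
open Filter

/-!
Away from the central index the terms of the series are dominated by `μ r^|n-k|` with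
`r = e^{-δ/2}`; since `n ↦ n - k` embeds `ℕ` into `ℤ`, the remainder is at most
`μ ∑_{m ≠ 0} r^|m| = 2r/(1-r) μ`. The same domination makes the series summable.
-/

/-- The value `F(x+iy) = ∑_{n=0}^∞ a_n e^{(x+iy)λ_n}` of the Dirichlet series. -/
noncomputable def Fval (a : ℕ → ℂ) (lam : ℕ → ℝ) (x y : ℝ) : ℂ :=
  ∑' n : ℕ, a n * Complex.exp (((x : ℂ) + (y : ℂ) * Complex.I) * (lam n : ℂ))

theorem hasSum_pow_natAbs {r : ℝ} (hr₀ : 0 ≤ r) (hr₁ : r < 1) :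
    HasSum (fun m : ℤ => r ^ m.natAbs) ((1 + r) / (1 - r)) := by
  have hgeom := hasSum_geometric_of_lt_one hr₀ hr₁
  have hneg : HasSum (fun n : ℕ => r ^ (-(n + 1 : ℤ)).natAbs) (r * (1 - r)⁻¹) := by
    have hexp : (fun n : ℕ => r ^ (-(n + 1 : ℤ)).natAbs) = fun n => r * r ^ n := by
      funext n
      rw [← pow_succ']
      congr 1
    rw [hexp]
    exact hgeom.mul_left r
  have hsum : (1 + r) / (1 - r) = (1 - r)⁻¹ + r * (1 - r)⁻¹ := by ring
  rw [hsum]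
  exact HasSum.of_nat_of_neg_add_one (by simpa only [Int.natAbs_natCast] using hgeom) hneg

theorem norm_tsum_sub_le_of_norm_le_geometric {E : Type*} [NormedAddCommGroup E] [CompleteSpace E]
    {f : ℕ → E} {k : ℕ} {M r : ℝ} (hM : 0 ≤ M) (hr₀ : 0 ≤ r) (hr₁ : r < 1)
    (hf : ∀ n ≠ k, ‖f n‖ ≤ M * r ^ ((n : ℤ) - k).natAbs) :
    ‖∑' n, f n - f k‖ ≤ 2 * r / (1 - r) * M := by
  set g : ℕ → ℝ := fun n => M * r ^ ((n : ℤ) - k).natAbs with hg_def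
  have hshift : Function.Injective fun n : ℕ => (n : ℤ) - k :=
    sub_left_injective.comp Nat.cast_injective
  have hpow := hasSum_pow_natAbs hr₀ hr₁
  have hg : Summable g := (hpow.summable.comp_injective hshift).mul_left M
  have hg_le : ∑' n, g n ≤ (1 + r) / (1 - r) * M := by
    rw [tsum_mul_left, mul_comm, ← hpow.tsum_eq]
    gcongr
    exact tsum_comp_le_tsum_of_inj hpow.summable (fun _ => by positivity) hshift
  have hfs : Summable f :=
    hg.of_norm_bounded_eventually ((Set.finite_singleton k).eventually_cofinite_notMem.mono hf)
  have hsub : ‖∑' n, f n - f k‖ ≤ ∑' n, g n - g k :=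
    (hasSum_ite_sub_hasSum hfs.hasSum k).norm_le_of_bounded (hasSum_ite_sub_hasSum hg.hasSum k)
      fun n => by
        split_ifs with hn
        · simp
        · exact hf n hn
  have hgk : g k = M := by simp [hg_def]
  have hr : (1 + r) / (1 - r) * M - M = 2 * r / (1 - r) * M := by
    have : 1 - r ≠ 0 := by linarith
    field_simp
    ring
  linarith

theorem norm_cexp_mul_ofReal (x y t : ℝ) :
    ‖Complex.exp (((x : ℂ) + (y : ℂ) * Complex.I) * (t : ℂ))‖ = Real.exp (x * t) := by
  rw [Complex.norm_exp]
  congr 1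
  simp

theorem stmt_14_general (a : ℕ → ℂ) (lam : ℕ → ℝ)
    (x : ℝ) (δ : ℝ) (hδ : 0 < δ) (mux : ℝ) (k : ℕ)
    (hk1 : ‖a k‖ * Real.exp (x * lam k) = mux)
    (hbound : ∀ n, n ≠ k →
      ‖a n‖ * Real.exp (x * lam n) ≤
        mux * Real.exp (-(δ / 2) * |(n : ℝ) - (k : ℝ)|)) :
    ∀ y : ℝ,
      ‖Fval a lam x y -
          a k * Complex.exp (((x : ℂ) + (y : ℂ) * Complex.I) * (lam k : ℂ))‖ ≤
        2 * Real.exp (-δ / 2) / (1 - Real.exp (-δ / 2)) * mux := by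
  intro y
  have hr₁ : Real.exp (-δ / 2) < 1 := Real.exp_lt_one_iff.mpr (by linarith)
  refine norm_tsum_sub_le_of_norm_le_geometric (hk1 ▸ by positivity) (Real.exp_pos _).le hr₁
    fun n hn => ?_
  have hdecay : Real.exp (-(δ / 2) * |(n : ℝ) - (k : ℝ)|) =
      Real.exp (-δ / 2) ^ ((n : ℤ) - k).natAbs := by
    rw [← Real.exp_nat_mul, Nat.cast_natAbs, neg_div, mul_comm]
    push_cast
    rfl
  rw [norm_mul, norm_cexp_mul_ofReal, ← hdecay]
  exact hbound n hn

/-- If `k = ν(x,F)` and `|a_n| e^{xλ_n} ≤ μ(x,F) e^{−(δ/2)|n−k|}` for all `n ≠ k`, then for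
every `y ∈ ℝ`: `|F(x+iy) − a_k e^{(x+iy)λ_k}| ≤ (2e^{−δ/2}/(1−e^{−δ/2})) μ(x,F)`. -/
theorem stmt_14 (a : ℕ → ℂ) (lam : ℕ → ℝ)
    (hdist : ∀ n m, n ≠ m → lam n ≠ lam m)
    (hlam0 : ∀ n, 0 ≤ lam n)
    (hlamsup : ∀ n, ∃ m, lam n < lam m)
    (hentire : ∀ x : ℝ, Summable fun n => ‖a n‖ * Real.exp (x * lam n))
    (x : ℝ) (δ : ℝ) (hδ : 0 < δ) (mux : ℝ) (k : ℕ)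
    (hmu : IsGreatest (Set.range fun n => ‖a n‖ * Real.exp (x * lam n)) mux)
    (hk1 : ‖a k‖ * Real.exp (x * lam k) = mux)
    (hk2 : ∀ n, ‖a n‖ * Real.exp (x * lam n) = mux → n ≤ k)
    (hbound : ∀ n, n ≠ k →
      ‖a n‖ * Real.exp (x * lam n) ≤
        mux * Real.exp (-(δ / 2) * |(n : ℝ) - (k : ℝ)|)) :
    ∀ y : ℝ,
      ‖Fval a lam x y -
          a k * Complex.exp (((x : ℂ) + (y : ℂ) * Complex.I) * (lam k : ℂ))‖ ≤
        2 * Real.exp (-δ / 2) / (1 - Real.exp (-δ / 2)) * mux :=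
  stmt_14_general a lam x δ hδ mux k hk1 hbound
end

section
/- (Theorem B, Stasyuk 2008.) For every strictly increasing sequence (μ_n) of positive reals with ∑_n 1/(μ_{n+1} − μ_n) < +∞ and every h ∈ L_+, there exist an entire Dirichlet series F ∈ D_a with |a_n| = e^{−μ_n}, a measurable set E ⊆ [0,∞), and a constant d > 0 such that M(x,F) ≥ (1+d) μ(x,F) and M(x,F) ≥ (1+d) m(x,F) for every x ∈ E, while ∫_{E ∩ [1,∞)} h(x) dx/x = +∞. -/
/-!
With `λ_{k+1} - λ_k = (μ_{k+1} - μ_k) / c_k`, the ratio of the `(k+1)`-th to the `k`-th term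
`e^{-μ_k + x λ_k}` is `exp ((μ_{k+1} - μ_k) (x - c_k) / c_k)`, so the two terms cross at `x = c_k`.
If the `c_k` grow fast enough, then on `[c_k - c_k / (μ_{k+1} - μ_k), c_k + c_k / (μ_{k+1} - μ_k)]`
these two terms are comparable and all others decay geometrically away from them. There the
maximal term is at most `3/4` of `F(x)`, and so is `|F(x + iy)|` for the `y` that puts the two
dominant terms in antiphase. Since `μ_{k+1} - μ_k → ∞` and `h → ∞`, choosing `c_k` also so large
that `h ≥ μ_{k+1} - μ_k` beyond `c_k / 2` gives each interval logarithmic `h`-measure at least `1`.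
-/

open Filter MeasureTheory

open Finset Set Function
open scoped Real Complex

section Ratio

variable {t : ℕ → ℝ} {q : ℝ}

theorem sub_one_mul_sum_range_le (h0 : 0 ≤ t 0) {n : ℕ} (h : ∀ j < n, q * t j ≤ t (j + 1)) :
    (q - 1) * ∑ j ∈ range n, t j ≤ t n := by
  induction n with
  | zero => simpa using h0
  | succ n ih =>
    rw [sum_range_succ]
    linear_combination ih (fun j hj => h j (by omega)) + h n n.lt_succ_self

theorem sub_one_mul_tsum_nat_add_le (hs : Summable t) {m : ℕ}
    (h : ∀ j ≥ m, q * t (j + 1) ≤ t j) : (q - 1) * ∑' i, t (i + (m + 1)) ≤ t m := by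
  have hsm : Summable fun i => t (i + m) := (summable_nat_add_iff m).2 hs
  have hsm1 : Summable fun i => t (i + (m + 1)) := (summable_nat_add_iff (m + 1)).2 hs
  have hsplit : ∑' i, t (i + m) = t m + ∑' i, t (i + (m + 1)) := by
    rw [hsm.tsum_eq_zero_add]
    simp only [zero_add, add_right_comm _ 1 m, add_assoc]
  have hle : ∑' i, q * t (i + (m + 1)) ≤ ∑' i, t (i + m) :=
    (hsm1.mul_left q).tsum_le_tsum (fun i => by simpa [add_assoc] using h (i + m) (by omega)) hsm
  rw [tsum_mul_left] at hle
  linear_combination hle + hsplit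

end Ratio

theorem Summable.tsum_eq_sum_range_add_pair_add_tsum {G : Type*} [AddCommGroup G]
    [TopologicalSpace G] [IsTopologicalAddGroup G] [T2Space G] {f : ℕ → G} (hf : Summable f)
    (n : ℕ) : ∑' k, f k = ∑ j ∈ range n, f j + (f n + f (n + 1)) + ∑' i, f (i + (n + 2)) := by
  rw [← hf.sum_add_tsum_nat_add (n + 2), sum_range_succ, sum_range_succ, add_assoc _ (f n)]

/-- The constants make both the maximal term and the modulus at the point where the two
dominant terms are in antiphase at most `3/4 (t n + t (n + 1))`. -/
structure IsDominantPair (t : ℕ → ℝ) (n : ℕ) : Prop where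
  le_three_mul_succ : t n ≤ 3 * t (n + 1)
  succ_le_three_mul : t (n + 1) ≤ 3 * t n
  head_le : 8 * ∑ j ∈ range n, t j ≤ t n
  tail_le : 8 * ∑' i, t (i + (n + 2)) ≤ t (n + 1)

namespace IsDominantPair

variable {t : ℕ → ℝ} {n : ℕ}

theorem mul_le_add (hd : IsDominantPair t n) (ht : ∀ k, 0 ≤ t k) (hs : Summable t) (k : ℕ) :
    (1 + 1 / 3) * t k ≤ t n + t (n + 1) := by
  have := hd.le_three_mul_succ
  have := hd.succ_le_three_mul
  rcases lt_trichotomy k n with hk | rfl | hk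
  · have := single_le_sum (fun j _ => ht j) (mem_range.2 hk)
    linarith [hd.head_le, ht (n + 1)]
  · linarith
  obtain rfl | hk := (Nat.succ_le_of_lt hk).eq_or_lt
  · linarith
  obtain ⟨i, rfl⟩ : ∃ i, k = i + (n + 2) := ⟨k - (n + 2), by omega⟩
  have := ((summable_nat_add_iff (n + 2)).2 hs).le_tsum i fun j _ => ht _
  linarith [hd.tail_le, ht n]

theorem head_add_abs_sub_add_tail_le (hd : IsDominantPair t n) :
    (1 + 1 / 3) * (∑ j ∈ range n, t j + |t n - t (n + 1)| + ∑' i, t (i + (n + 2)))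
      ≤ t n + t (n + 1) := by
  have := hd.le_three_mul_succ
  have := hd.succ_le_three_mul
  have : |t n - t (n + 1)| ≤ (t n + t (n + 1)) / 2 := abs_le.2 ⟨by linarith, by linarith⟩
  linarith [hd.head_le, hd.tail_le]

end IsDominantPair

theorem exists_seq_ge_and_mul_le (b r : ℕ → ℝ) :
    ∃ c : ℕ → ℝ, (∀ k, b k ≤ c k) ∧ ∀ k, r k * c k ≤ c (k + 1) :=
  ⟨fun k => Nat.rec (b 0) (fun k ck => max (r k * ck) (b (k + 1))) k,
    fun k => by cases k <;> simp, fun _ => le_max_left _ _⟩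

theorem tendsto_atTop_of_summable_one_div_s18 {δ : ℕ → ℝ} (hpos : ∀ k, 0 < δ k)
    (hs : Summable fun k => 1 / δ k) : Tendsto δ atTop atTop := by
  have h := tendsto_nhdsWithin_iff.2 ⟨hs.tendsto_atTop_zero, Eventually.of_forall fun k =>
    one_div_pos.2 (hpos k)⟩
  convert h.inv_tendsto_nhdsGT_zero
  ext k
  simp

theorem one_le_setLIntegral_div_self {h : ℝ → ℝ} {c D : ℝ} (hc : 0 < c) (hD : 2 ≤ D)
    (hh : ∀ x ∈ Icc (c - c / D) (c + c / D), D ≤ h x) :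
    1 ≤ ∫⁻ x in Icc (c - c / D) (c + c / D), ENNReal.ofReal (h x / x) := by
  have hw : c / D ≤ c / 2 := div_le_div_of_nonneg_left hc.le two_pos hD
  have hlow : ∀ x ∈ Icc (c - c / D) (c + c / D), D / (c + c / D) ≤ h x / x := fun x hx =>
    div_le_div₀ (by linarith [hh x hx]) (hh x hx) (by linarith [hx.1]) hx.2
  calc (1 : ENNReal)
      ≤ ENNReal.ofReal (D / (c + c / D)) * volume (Icc (c - c / D) (c + c / D)) := by
        rw [Real.volume_Icc, ← ENNReal.ofReal_mul (by positivity), ← ENNReal.ofReal_one]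
        apply ENNReal.ofReal_le_ofReal
        rw [div_mul_eq_mul_div, le_div_iff₀ (by positivity)]
        field_simp
        nlinarith
    _ ≤ ∫⁻ x in Icc (c - c / D) (c + c / D), ENNReal.ofReal (h x / x) := by
        rw [← setLIntegral_const]
        exact setLIntegral_mono' measurableSet_Icc fun x hx => ENNReal.ofReal_le_ofReal (hlow x hx)

theorem setLIntegral_iUnion_eq_top {α : Type*} [MeasurableSpace α] {ν : Measure α}
    {s : ℕ → Set α} {f : α → ENNReal} (hm : ∀ i, MeasurableSet (s i))
    (hd : Pairwise (Disjoint on s)) (h1 : ∀ i, 1 ≤ ∫⁻ x in s i, f x ∂ν) :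
    ∫⁻ x in ⋃ i, s i, f x ∂ν = ⊤ := by
  rw [lintegral_iUnion hm hd]
  exact top_unique ((ENNReal.tsum_const_eq_top_of_ne_zero one_ne_zero).symm.le.trans
    (ENNReal.tsum_le_tsum h1))

section DirichletSeries

variable {lam : ℕ → ℝ} {x : ℝ}

theorem norm_dirichlet_term (a : ℕ → ℂ) (lam : ℕ → ℝ) (x y : ℝ) (k : ℕ) :
    ‖a k * cexp (((x : ℂ) + (y : ℂ) * Complex.I) * (lam k : ℂ))‖ = ‖a k‖ * rexp (x * lam k) := by
  rw [norm_mul, Complex.norm_exp]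
  simp

theorem ofReal_mul_cexp (r l x y : ℝ) :
    (r : ℂ) * cexp (((x : ℂ) + (y : ℂ) * Complex.I) * (l : ℂ))
      = ((r * rexp (x * l) : ℝ) : ℂ) * cexp (((y * l : ℝ) : ℂ) * Complex.I) := by
  push_cast
  rw [mul_assoc, ← Complex.exp_add]
  ring_nf

theorem norm_Fval_le_tsum {a : ℕ → ℂ} (hs : Summable fun k => ‖a k‖ * rexp (x * lam k))
    (y : ℝ) :
    ‖Fval a lam x y‖ ≤ ∑' k, ‖a k‖ * rexp (x * lam k) := by
  simp only [← norm_dirichlet_term a lam x y] at hs ⊢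
  exact norm_tsum_le_tsum_norm hs

theorem Fval_ofReal_zero (r lam : ℕ → ℝ) (x : ℝ) :
    Fval (fun k => (r k : ℂ)) lam x 0 = ((∑' k, r k * rexp (x * lam k) : ℝ) : ℂ) := by
  rw [Fval, Complex.ofReal_tsum]
  refine tsum_congr fun k => ?_
  rw [ofReal_mul_cexp]
  simp

theorem tsum_le_iSup_norm_Fval {r : ℕ → ℝ} (hr : ∀ k, 0 ≤ r k)
    (hs : Summable fun k => r k * rexp (x * lam k)) :
    ∑' k, r k * rexp (x * lam k) ≤ ⨆ y, ‖Fval (fun k => (r k : ℂ)) lam x y‖ := by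
  have hs' : Summable fun k => ‖(r k : ℂ)‖ * rexp (x * lam k) := by
    simpa [Complex.norm_real, abs_of_nonneg (hr _)] using hs
  have hbdd : BddAbove (range fun y => ‖Fval (fun k => (r k : ℂ)) lam x y‖) :=
    ⟨_, forall_mem_range.2 (norm_Fval_le_tsum hs')⟩
  refine le_trans (le_of_eq ?_) (le_ciSup hbdd 0)
  rw [Fval_ofReal_zero, Complex.norm_real, Real.norm_of_nonneg (tsum_nonneg fun k => by
    have := hr k; positivity)]

theorem norm_antiphase_pair (r lam : ℕ → ℝ) (x : ℝ) {n : ℕ} {y : ℝ}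
    (hy : y * (lam (n + 1) - lam n) = π) :
    ‖(r n : ℂ) * cexp (((x : ℂ) + (y : ℂ) * Complex.I) * (lam n : ℂ))
        + (r (n + 1) : ℂ) * cexp (((x : ℂ) + (y : ℂ) * Complex.I) * (lam (n + 1) : ℂ))‖
      = |r n * rexp (x * lam n) - r (n + 1) * rexp (x * lam (n + 1))| := by
  have hy' : y * lam (n + 1) = y * lam n + π := by linear_combination hy
  rw [ofReal_mul_cexp, ofReal_mul_cexp, hy', Complex.ofReal_add, add_mul, Complex.exp_add,
    Complex.exp_pi_mul_I]
  rw [show ∀ (a b : ℝ) (z : ℂ), (a : ℂ) * z + (b : ℂ) * (z * -1) = z * ((a - b : ℝ) : ℂ) by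
    intros; push_cast; ring]
  rw [norm_mul, Complex.norm_exp_ofReal_mul_I, Complex.norm_real, one_mul, Real.norm_eq_abs]

theorem norm_Fval_le_of_antiphase {r : ℕ → ℝ} (hr : ∀ k, 0 ≤ r k)
    (hs : Summable fun k => r k * rexp (x * lam k)) (n : ℕ) {y : ℝ}
    (hy : y * (lam (n + 1) - lam n) = π) :
    ‖Fval (fun k => (r k : ℂ)) lam x y‖ ≤ ∑ j ∈ range n, r j * rexp (x * lam j)
      + |r n * rexp (x * lam n) - r (n + 1) * rexp (x * lam (n + 1))|
      + ∑' i, r (i + (n + 2)) * rexp (x * lam (i + (n + 2))) := by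
  set f : ℕ → ℂ := fun k => (r k : ℂ) * cexp (((x : ℂ) + (y : ℂ) * Complex.I) * (lam k : ℂ))
  have hnorm : ∀ k, ‖f k‖ = r k * rexp (x * lam k) := fun k => by
    rw [norm_dirichlet_term (fun k => (r k : ℂ)), Complex.norm_real, Real.norm_of_nonneg (hr k)]
  have hfs : Summable fun k => ‖f k‖ := by simpa only [hnorm] using hs
  calc ‖Fval (fun k => (r k : ℂ)) lam x y‖
      = ‖∑ j ∈ range n, f j + (f n + f (n + 1)) + ∑' i, f (i + (n + 2))‖ := by
        rw [Fval, hfs.of_norm.tsum_eq_sum_range_add_pair_add_tsum n]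
    _ ≤ ∑ j ∈ range n, ‖f j‖ + ‖f n + f (n + 1)‖ + ∑' i, ‖f (i + (n + 2))‖ :=
        norm_add₃_le.trans (add_le_add_three (norm_sum_le _ _) le_rfl
          (norm_tsum_le_tsum_norm ((summable_nat_add_iff (n + 2)).2 hfs)))
    _ = _ := by simp only [hnorm, f, norm_antiphase_pair r lam x hy]

theorem IsDominantPair.iSup_norm_Fval {r : ℕ → ℝ} (hr : ∀ k, 0 ≤ r k)
    (hs : Summable fun k => r k * rexp (x * lam k)) {n : ℕ} (hlam : lam n ≠ lam (n + 1))
    (hd : IsDominantPair (fun k => r k * rexp (x * lam k)) n) :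
    (1 + 1 / 3) * (⨆ k, ‖(r k : ℂ)‖ * rexp (x * lam k))
        ≤ ⨆ y, ‖Fval (fun k => (r k : ℂ)) lam x y‖ ∧
      (1 + 1 / 3) * (⨅ y, ‖Fval (fun k => (r k : ℂ)) lam x y‖)
        ≤ ⨆ y, ‖Fval (fun k => (r k : ℂ)) lam x y‖ := by
  have ht : ∀ k, 0 ≤ r k * rexp (x * lam k) := fun k => mul_nonneg (hr k) (Real.exp_pos _).le
  have hpair : r n * rexp (x * lam n) + r (n + 1) * rexp (x * lam (n + 1))
      ≤ ∑' k, r k * rexp (x * lam k) := by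
    simpa [sum_pair (Nat.succ_ne_self n).symm] using hs.sum_le_tsum {n, n + 1} fun k _ => ht k
  have hM := hpair.trans (tsum_le_iSup_norm_Fval hr hs)
  refine ⟨?_, ?_⟩
  · have hsup : (⨆ k, ‖(r k : ℂ)‖ * rexp (x * lam k))
        ≤ (r n * rexp (x * lam n) + r (n + 1) * rexp (x * lam (n + 1))) / (1 + 1 / 3) :=
      ciSup_le fun k => by
        rw [Complex.norm_real, Real.norm_of_nonneg (hr k), le_div_iff₀ (by norm_num), mul_comm]
        exact hd.mul_le_add ht hs k
    rw [le_div_iff₀ (by norm_num), mul_comm] at hsup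
    exact hsup.trans hM
  · have hy : π / (lam (n + 1) - lam n) * (lam (n + 1) - lam n) = π :=
      div_mul_cancel₀ _ (sub_ne_zero.2 hlam.symm)
    calc (1 + 1 / 3) * (⨅ y, ‖Fval (fun k => (r k : ℂ)) lam x y‖)
        ≤ (1 + 1 / 3) * ‖Fval (fun k => (r k : ℂ)) lam x (π / (lam (n + 1) - lam n))‖ := by
          gcongr
          exact ciInf_le ⟨0, forall_mem_range.2 fun y => norm_nonneg _⟩ _
      _ ≤ _ := by gcongr; exact norm_Fval_le_of_antiphase hr hs n hy
      _ ≤ _ := hd.head_add_abs_sub_add_tail_le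
      _ ≤ _ := hM

end DirichletSeries

section Construction

variable {μ c : ℕ → ℝ} {N n k : ℕ} {x : ℝ}

/-- The exponents for which the `k`-th and `(k + 1)`-th terms `e^{-μ_k + x λ_k}` of the
series are equal exactly at `x = c k`. -/
noncomputable def crossingExponent (μ c : ℕ → ℝ) (n : ℕ) : ℝ :=
  ∑ j ∈ range n, (μ (j + 1) - μ j) / c j

noncomputable def crossingTerm (μ c : ℕ → ℝ) (x : ℝ) (k : ℕ) : ℝ :=
  rexp (-μ k) * rexp (x * crossingExponent μ c k)

theorem crossingTerm_pos : 0 < crossingTerm μ c x k := by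
  unfold crossingTerm; positivity

theorem crossingTerm_succ (hc : c k ≠ 0) :
    crossingTerm μ c x (k + 1)
      = crossingTerm μ c x k * rexp ((μ (k + 1) - μ k) / c k * (x - c k)) := by
  simp only [crossingTerm, crossingExponent, sum_range_succ, ← Real.exp_add]
  congr 1
  field_simp
  ring

theorem nine_mul_crossingTerm_le_succ (hc : c k ≠ 0)
    (hρ : 8 ≤ (μ (k + 1) - μ k) / c k * (x - c k)) :
    9 * crossingTerm μ c x k ≤ crossingTerm μ c x (k + 1) := by
  rw [crossingTerm_succ hc, mul_comm]
  gcongr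
  · exact crossingTerm_pos.le
  · linarith [Real.add_one_le_exp ((μ (k + 1) - μ k) / c k * (x - c k))]

theorem nine_mul_crossingTerm_succ_le (hc : c k ≠ 0)
    (hρ : (μ (k + 1) - μ k) / c k * (x - c k) ≤ -8) :
    9 * crossingTerm μ c x (k + 1) ≤ crossingTerm μ c x k := by
  have h9 : 9 * rexp (-8) ≤ 1 := by
    rw [Real.exp_neg, ← div_eq_mul_inv, div_le_one (Real.exp_pos 8)]
    linarith [Real.add_one_le_exp 8]
  rw [crossingTerm_succ hc]
  calc 9 * (crossingTerm μ c x k * rexp ((μ (k + 1) - μ k) / c k * (x - c k)))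
      ≤ crossingTerm μ c x k * (9 * rexp (-8)) := by
        rw [mul_left_comm]
        gcongr
        exact crossingTerm_pos.le
    _ ≤ crossingTerm μ c x k := mul_le_of_le_one_right crossingTerm_pos.le h9

theorem crossingTerm_le_three_mul_succ_and_succ_le (hc : c k ≠ 0)
    (hρ : |(μ (k + 1) - μ k) / c k * (x - c k)| ≤ 1) :
    crossingTerm μ c x k ≤ 3 * crossingTerm μ c x (k + 1) ∧
      crossingTerm μ c x (k + 1) ≤ 3 * crossingTerm μ c x k := by
  have he : rexp 1 ≤ 3 := by linarith [Real.exp_one_lt_d9]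
  have hlo : 1 ≤ 3 * rexp ((μ (k + 1) - μ k) / c k * (x - c k)) :=
    calc 1 ≤ 3 * rexp (-1) := by
          rw [Real.exp_neg, ← div_eq_mul_inv, one_le_div (Real.exp_pos 1)]
          exact he
      _ ≤ _ := by gcongr; exact neg_le_of_abs_le hρ
  have hhi := (Real.exp_le_exp.2 (le_of_abs_le hρ)).trans he
  have ht := crossingTerm_pos (μ := μ) (c := c) (x := x) (k := k)
  rw [crossingTerm_succ hc]
  constructor <;> nlinarith

/-- The growth condition keeps the crossing intervals so far apart that the terms decay
geometrically away from the two dominant ones. -/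
structure IsAdmissibleCenters (μ c : ℕ → ℝ) (N : ℕ) : Prop where
  strictMono : StrictMono μ
  sixteen_le_gap : ∀ k ≥ N, 16 ≤ μ (k + 1) - μ k
  pos_zero : 0 < c 0
  growth : ∀ k, (3 + 16 / (μ (k + 1) - μ k)) * c k ≤ c (k + 1)

def crossingInterval (μ c : ℕ → ℝ) (n : ℕ) : Set ℝ :=
  Icc (c n - c n / (μ (n + 1) - μ n)) (c n + c n / (μ (n + 1) - μ n))

namespace IsAdmissibleCenters

theorem gap_pos (hc : IsAdmissibleCenters μ c N) (k : ℕ) : 0 < μ (k + 1) - μ k :=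
  sub_pos.2 (hc.strictMono k.lt_succ_self)

theorem three_mul_add_le (hc : IsAdmissibleCenters μ c N) (k : ℕ) :
    3 * c k + 16 * c k / (μ (k + 1) - μ k) ≤ c (k + 1) := by
  simpa only [add_mul, div_mul_eq_mul_div] using hc.growth k

theorem pos (hc : IsAdmissibleCenters μ c N) (k : ℕ) : 0 < c k := by
  induction k with
  | zero => exact hc.pos_zero
  | succ k ih =>
    have := div_nonneg (mul_nonneg (by norm_num : (0 : ℝ) ≤ 16) ih.le) (hc.gap_pos k).le
    linarith [hc.three_mul_add_le k]

theorem three_mul_le (hc : IsAdmissibleCenters μ c N) (k : ℕ) : 3 * c k ≤ c (k + 1) := by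
  have := div_nonneg (mul_nonneg (by norm_num : (0 : ℝ) ≤ 16) (hc.pos k).le) (hc.gap_pos k).le
  linarith [hc.three_mul_add_le k]

theorem monotone (hc : IsAdmissibleCenters μ c N) : Monotone c :=
  monotone_nat_of_le_succ fun k => by linarith [hc.three_mul_le k, hc.pos k]

theorem tendsto_atTop (hc : IsAdmissibleCenters μ c N) : Tendsto c atTop atTop :=
  tendsto_atTop_of_geom_le (hc.pos 0) (by norm_num) hc.three_mul_le

theorem crossingExponent_strictMono (hc : IsAdmissibleCenters μ c N) :
    StrictMono (crossingExponent μ c) :=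
  strictMono_nat_of_lt_succ fun n => by
    rw [crossingExponent, crossingExponent, sum_range_succ, lt_add_iff_pos_right]
    exact div_pos (hc.gap_pos n) (hc.pos n)

theorem crossingExponent_nonneg (hc : IsAdmissibleCenters μ c N) (n : ℕ) :
    0 ≤ crossingExponent μ c n :=
  sum_nonneg fun j _ => (div_pos (hc.gap_pos j) (hc.pos j)).le

theorem nine_mul_le_succ (hc : IsAdmissibleCenters μ c N) (hx : c (k + 1) / 2 ≤ x) :
    9 * crossingTerm μ c x k ≤ crossingTerm μ c x (k + 1) := by
  refine nine_mul_crossingTerm_le_succ (hc.pos k).ne' ?_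
  have h8 : 8 * c k / (μ (k + 1) - μ k) ≤ x - c k := by
    have : 16 * c k / (μ (k + 1) - μ k) = 2 * (8 * c k / (μ (k + 1) - μ k)) := by ring
    linarith [hc.three_mul_add_le k, hc.pos k]
  rw [div_le_iff₀ (hc.gap_pos k)] at h8
  rw [div_mul_eq_mul_div, le_div_iff₀ (hc.pos k)]
  linarith

theorem nine_mul_succ_le (hc : IsAdmissibleCenters μ c N) (hk : N ≤ k) (hx : x ≤ c k / 2) :
    9 * crossingTerm μ c x (k + 1) ≤ crossingTerm μ c x k := by
  refine nine_mul_crossingTerm_succ_le (hc.pos k).ne' ?_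
  have hck := hc.pos k
  calc (μ (k + 1) - μ k) / c k * (x - c k) ≤ (μ (k + 1) - μ k) / c k * (-(c k / 2)) := by
        gcongr
        · exact (div_pos (hc.gap_pos k) hck).le
        · linarith
    _ = -((μ (k + 1) - μ k) / 2) := by field_simp
    _ ≤ -8 := by linarith [hc.sixteen_le_gap k hk]

theorem summable_crossingTerm (hc : IsAdmissibleCenters μ c N) (x : ℝ) :
    Summable (crossingTerm μ c x) := by
  refine summable_of_ratio_norm_eventually_le (r := 1 / 9) (by norm_num) ?_
  filter_upwards [eventually_ge_atTop N, hc.tendsto_atTop.eventually_ge_atTop (2 * x)]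
    with k hk hx
  rw [Real.norm_of_nonneg crossingTerm_pos.le, Real.norm_of_nonneg crossingTerm_pos.le]
  linarith [hc.nine_mul_succ_le hk (x := x) (by linarith)]

theorem mem_crossingInterval_bounds (hc : IsAdmissibleCenters μ c N) (hn : N ≤ n)
    (hx : x ∈ crossingInterval μ c n) : c n / 2 ≤ x ∧ x < 3 / 2 * c n := by
  have hw : c n / (μ (n + 1) - μ n) ≤ c n / 16 :=
    div_le_div_of_nonneg_left (hc.pos n).le (by norm_num) (hc.sixteen_le_gap n hn)
  have := hc.pos n
  exact ⟨by linarith [hx.1], by linarith [hx.2]⟩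

theorem isDominantPair (hc : IsAdmissibleCenters μ c N) (hn : N ≤ n)
    (hx : x ∈ crossingInterval μ c n) : IsDominantPair (crossingTerm μ c x) n := by
  obtain ⟨hlo, hhi⟩ := hc.mem_crossingInterval_bounds hn hx
  have hρ : |(μ (n + 1) - μ n) / c n * (x - c n)| ≤ 1 := by
    have hx' : |x - c n| ≤ c n / (μ (n + 1) - μ n) :=
      abs_sub_le_iff.2 ⟨by linarith [hx.2], by linarith [hx.1]⟩
    rw [abs_mul, abs_of_pos (div_pos (hc.gap_pos n) (hc.pos n))]
    calc _ ≤ (μ (n + 1) - μ n) / c n * (c n / (μ (n + 1) - μ n)) := by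
          gcongr; exact (div_pos (hc.gap_pos n) (hc.pos n)).le
      _ = 1 := by field_simp [(hc.gap_pos n).ne', (hc.pos n).ne']
  obtain ⟨h3, h3'⟩ := crossingTerm_le_three_mul_succ_and_succ_le (hc.pos n).ne' hρ
  have hhead := sub_one_mul_sum_range_le crossingTerm_pos.le fun j hj =>
    hc.nine_mul_le_succ ((div_le_div_of_nonneg_right (hc.monotone hj) zero_le_two).trans hlo)
  have htail := sub_one_mul_tsum_nat_add_le (hc.summable_crossingTerm x) (m := n + 1) fun j hj =>
    hc.nine_mul_succ_le (by omega) (by linarith [hc.three_mul_le n, hc.monotone hj])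
  norm_num at hhead htail
  exact ⟨h3, h3', hhead, htail⟩

theorem pairwise_disjoint_crossingInterval (hc : IsAdmissibleCenters μ c N) :
    Pairwise (Disjoint on fun m => crossingInterval μ c (N + m)) := by
  refine pairwise_disjoint_on _ |>.2 fun m m' hm => disjoint_left.2 fun x hx hx' => ?_
  have h1 := (hc.mem_crossingInterval_bounds (by omega) hx).2
  have h2 := (hc.mem_crossingInterval_bounds (by omega) hx').1
  have := hc.monotone (show N + m + 1 ≤ N + m' by omega)
  linarith [hc.three_mul_le (N + m)]

end IsAdmissibleCenters

end Construction

theorem stmt_18_general (μ : ℕ → ℝ) (hμmono : StrictMono μ)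
    (hsum : Summable fun n => 1 / (μ (n + 1) - μ n))
    (h : ℝ → ℝ)
    (hhinf : Tendsto h atTop atTop) :
    ∃ (a : ℕ → ℂ) (lam : ℕ → ℝ) (E : Set ℝ) (d : ℝ),
      (∀ n, ‖a n‖ = Real.exp (-μ n)) ∧
      (∀ n m, n ≠ m → lam n ≠ lam m) ∧
      (∀ n, 0 ≤ lam n) ∧
      (∀ n, ∃ m, lam n < lam m) ∧
      (∀ x : ℝ, Summable fun n => ‖a n‖ * Real.exp (x * lam n)) ∧
      MeasurableSet E ∧ E ⊆ Set.Ici 0 ∧ 0 < d ∧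
      (∀ x ∈ E,
        (1 + d) * (⨆ n : ℕ, ‖a n‖ * Real.exp (x * lam n)) ≤
            (⨆ y : ℝ, ‖Fval a lam x y‖) ∧
        (1 + d) * (⨅ y : ℝ, ‖Fval a lam x y‖) ≤
            (⨆ y : ℝ, ‖Fval a lam x y‖)) ∧
      (∫⁻ x in E ∩ Set.Ici 1, ENNReal.ofReal (h x / x)) = ⊤ := by
  have hgap : ∀ k, 0 < μ (k + 1) - μ k := fun k => sub_pos.2 (hμmono k.lt_succ_self)
  obtain ⟨N, hN⟩ := eventually_atTop.1
    ((tendsto_atTop_of_summable_one_div_s18 hgap hsum).eventually_ge_atTop 16)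
  choose R hR using fun k => eventually_atTop.1 (hhinf.eventually_ge_atTop (μ (k + 1) - μ k))
  obtain ⟨c, hcR, hcgrowth⟩ := exists_seq_ge_and_mul_le (fun k => max 2 (2 * R k))
    fun k => 3 + 16 / (μ (k + 1) - μ k)
  have hc : IsAdmissibleCenters μ c N :=
    ⟨hμmono, hN, two_pos.trans_le ((le_max_left _ _).trans (hcR 0)), hcgrowth⟩
  have hmem : ∀ m, ∀ x ∈ crossingInterval μ c (N + m), 1 ≤ x ∧ R (N + m) ≤ x := fun m x hx => by
    have := (hc.mem_crossingInterval_bounds (Nat.le_add_right N m) hx).1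
    have := (le_max_left _ _).trans (hcR (N + m))
    have := (le_max_right _ _).trans (hcR (N + m))
    constructor <;> linarith
  have hnorm : ∀ k, ‖((rexp (-μ k) : ℝ) : ℂ)‖ = rexp (-μ k) := fun k => by
    rw [Complex.norm_real, Real.norm_of_nonneg (Real.exp_pos _).le]
  have hE : ⋃ m, crossingInterval μ c (N + m) ⊆ Ici 1 :=
    iUnion_subset fun m x hx => (hmem m x hx).1
  refine ⟨fun k => (rexp (-μ k) : ℂ), crossingExponent μ c, ⋃ m, crossingInterval μ c (N + m),
    1 / 3, hnorm, fun n m hnm => hc.crossingExponent_strictMono.injective.ne hnm,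
    hc.crossingExponent_nonneg, fun n => ⟨n + 1, hc.crossingExponent_strictMono n.lt_succ_self⟩,
    fun x => by simp only [hnorm]; exact hc.summable_crossingTerm x,
    MeasurableSet.iUnion fun m => measurableSet_Icc, hE.trans (Ici_subset_Ici.2 zero_le_one),
    by norm_num, fun x hx => ?_, ?_⟩
  · obtain ⟨m, hm⟩ := mem_iUnion.1 hx
    exact (hc.isDominantPair (Nat.le_add_right N m) hm).iSup_norm_Fval
      (fun k => (Real.exp_pos _).le) (hc.summable_crossingTerm x)
      (hc.crossingExponent_strictMono.injective.ne (Nat.succ_ne_self _).symm)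
  · rw [inter_eq_left.2 hE]
    exact setLIntegral_iUnion_eq_top (fun m => measurableSet_Icc)
      hc.pairwise_disjoint_crossingInterval fun m => one_le_setLIntegral_div_self (hc.pos _)
        (by linarith [hN (N + m) (Nat.le_add_right N m)]) fun x hx => hR _ x (hmem m x hx).2

/-- Theorem B (Stasyuk, 2008): for every strictly increasing positive sequence `(μ_n)`
with `∑ 1/(μ_{n+1} − μ_n) < +∞` and every `h ∈ L_+`, there are an entire Dirichlet
series `F ∈ D_a` with `|a_n| = e^{−μ_n}`, a measurable set `E ⊆ [0,∞)` and a constant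
`d > 0` such that `M(x,F) ≥ (1+d) μ(x,F)` and `M(x,F) ≥ (1+d) m(x,F)` for all `x ∈ E`,
while `E` has infinite logarithmic `h`-measure. -/
theorem stmt_18 (μ : ℕ → ℝ) (hμpos : ∀ n, 0 < μ n) (hμmono : StrictMono μ)
    (hsum : Summable fun n => 1 / (μ (n + 1) - μ n))
    (h : ℝ → ℝ) (hhpos : ∀ x ≥ (0 : ℝ), 0 < h x)
    (hhcont : ContinuousOn h (Set.Ici 0))
    (hhmono : StrictMonoOn h (Set.Ici 0))
    (hhinf : Tendsto h atTop atTop) :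
    ∃ (a : ℕ → ℂ) (lam : ℕ → ℝ) (E : Set ℝ) (d : ℝ),
      (∀ n, ‖a n‖ = Real.exp (-μ n)) ∧
      (∀ n m, n ≠ m → lam n ≠ lam m) ∧
      (∀ n, 0 ≤ lam n) ∧
      (∀ n, ∃ m, lam n < lam m) ∧
      (∀ x : ℝ, Summable fun n => ‖a n‖ * Real.exp (x * lam n)) ∧
      MeasurableSet E ∧ E ⊆ Set.Ici 0 ∧ 0 < d ∧
      (∀ x ∈ E,
        (1 + d) * (⨆ n : ℕ, ‖a n‖ * Real.exp (x * lam n)) ≤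
            (⨆ y : ℝ, ‖Fval a lam x y‖) ∧
        (1 + d) * (⨅ y : ℝ, ‖Fval a lam x y‖) ≤
            (⨆ y : ℝ, ‖Fval a lam x y‖)) ∧
      (∫⁻ x in E ∩ Set.Ici 1, ENNReal.ofReal (h x / x)) = ⊤ :=
  stmt_18_general μ hμmono hsum h hhinf
end
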